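/- arXiv:2410.08297 — 5 statements merged into one kernel-verified Lean document; each statement's English description precedes it below -/
import Mathlib

section
/- Let a = ⟨Av, Ax⟩ ≠ 0 and b = ‖Ax‖² − ‖Av‖². Then τ* = sign(a)·(b/(2|a|) + sqrt(b²/(4a²) + 1)) is the unique global maximizer of h(τ) = ‖A(v+τx)‖²/(1+τ²) over τ ∈ R. -/
open scoped RealInnerProductSpace

theorem stmt3 {d m : ℕ}
    (A : EuclideanSpace ℝ (Fin d) →L[ℝ] EuclideanSpace ℝ (Fin m))
    (v x : EuclideanSpace ℝ (Fin d))
    (hv : ‖v‖ = 1) (hx : ‖x‖ = 1) (hvx : ⟪v, x⟫ = 0)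
    (h : ℝ → ℝ) (hh : ∀ τ, h τ = ‖A (v + τ • x)‖ ^ 2 / (1 + τ ^ 2))
    (a b : ℝ) (ha : a = ⟪A v, A x⟫) (hb : b = ‖A x‖ ^ 2 - ‖A v‖ ^ 2)
    (ha0 : a ≠ 0)
    (τstar : ℝ)
    (hτ : τstar = Real.sign a * (b / (2 * |a|) + Real.sqrt (b ^ 2 / (4 * a ^ 2) + 1))) :
    (∀ τ : ℝ, h τ ≤ h τstar) ∧ ∀ τ : ℝ, (∀ s : ℝ, h s ≤ h τ) → τ = τstar := by
  have ha2 : (0:ℝ) < a ^ 2 := by positivity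
  set P := ‖A v‖ ^ 2 with hP
  set Q := ‖A x‖ ^ 2 with hQ
  set s := Real.sqrt (b ^ 2 + 4 * a ^ 2) with hsdef
  have hs : s ^ 2 = b ^ 2 + 4 * a ^ 2 := Real.sq_sqrt (by positivity)
  have hsb : |b| < s := by
    rw [hsdef, show (|b| : ℝ) = Real.sqrt (b ^ 2) by rw [Real.sqrt_sq_eq_abs]]
    exact Real.sqrt_lt_sqrt (by positivity) (by nlinarith)
  have hbs : b < s := lt_of_abs_lt hsb
  have hsb' : (0:ℝ) < s - b := by linarith
  have hQb : Q = P + b := by rw [hb]; ring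
  -- τstar in simplified form
  have hsqrt : Real.sqrt (b ^ 2 / (4 * a ^ 2) + 1) = s / (2 * |a|) := by
    have h2a : ((2 * |a|) ^ 2 : ℝ) = 4 * a ^ 2 := by
      rw [mul_pow, sq_abs]; ring
    have h4 : b ^ 2 / (4 * a ^ 2) + 1 = (b ^ 2 + 4 * a ^ 2) / (2 * |a|) ^ 2 := by
      rw [h2a, add_div, div_self (by positivity : (4 * a ^ 2 : ℝ) ≠ 0)]
    rw [h4, Real.sqrt_div (by positivity), Real.sqrt_sq (by positivity)]
  have hτ2 : τstar = (b + s) / (2 * a) := by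
    rcases ha0.lt_or_gt with hlt | hlt
    · rw [hτ, hsqrt, Real.sign_of_neg hlt, abs_of_neg hlt]
      field_simp
      ring
    · rw [hτ, hsqrt, Real.sign_of_pos hlt, abs_of_pos hlt]
      field_simp
  have hts : 2 * a * τstar = b + s := by
    rw [hτ2]; field_simp
  -- critical point relation
  have hs' : (2 * a * τstar - b) ^ 2 = b ^ 2 + 4 * a ^ 2 := by
    linear_combination (2 * a * τstar - b + s) * hts + hs
  have h4c : (4 * a) * (a * τstar ^ 2 - b * τstar - a) = 0 := by
    linear_combination hs'
  have hcrit : a * τstar ^ 2 - b * τstar - a = 0 := by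
    rcases mul_eq_zero.mp h4c with h0 | h0
    · exact absurd (by linarith : a = 0) ha0
    · exact h0
  -- expansion of the norm
  have key : ∀ τ : ℝ, ‖A (v + τ • x)‖ ^ 2 = P + 2 * a * τ + Q * τ ^ 2 := by
    intro τ
    have hlin : A (v + τ • x) = A v + τ • A x := by
      rw [map_add, map_smul]
    rw [hlin, norm_add_sq_real, inner_smul_right, norm_smul, ha]
    rw [Real.norm_eq_abs, mul_pow, sq_abs]
    ring
  have hh' : ∀ τ : ℝ, h τ = (P + 2 * a * τ + Q * τ ^ 2) / (1 + τ ^ 2) := by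
    intro τ; rw [hh, key]
  -- value at τstar
  have hval : h τstar = P + (b + s) / 2 := by
    rw [hh', div_eq_iff (by positivity : (1 + τstar ^ 2 : ℝ) ≠ 0), hQb]
    linear_combination ((1 + τstar ^ 2) / 2) * hts - τstar * hcrit
  have hmax : ∀ τ : ℝ, h τ ≤ h τstar := by
    intro τ
    rw [hh' τ, hval, div_le_iff₀ (by positivity), hQb]
    nlinarith [sq_nonneg ((s - b) * τ - 2 * a), hs, hsb', sq_nonneg τ]
  refine ⟨hmax, fun τ hτm => ?_⟩
  have heq : h τ = h τstar := le_antisymm (hmax τ) (hτm τstar)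
  rw [hh' τ, hval, div_eq_iff (by positivity : (1 + τ ^ 2 : ℝ) ≠ 0), hQb] at heq
  have hzero : ((s - b) * τ - 2 * a) ^ 2 = 0 := by
    linear_combination (-2 * (s - b)) * heq - hs
  have hz : (s - b) * τ - 2 * a = 0 := by
    exact pow_eq_zero_iff (by norm_num) |>.mp hzero
  have h5 : 2 * a * ((s - b) * τstar - 2 * a) = 0 := by
    linear_combination (s - b) * hts + hs
  have h5' : (s - b) * τstar - 2 * a = 0 := by
    rcases mul_eq_zero.mp h5 with h0 | h0
    · exact absurd (by linarith : a = 0) ha0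
    · exact h0
  have : (s - b) * τ = (s - b) * τstar := by linarith
  exact mul_left_cancel₀ hsb'.ne' this
end

section
/- Let a = ⟨Av,Ax⟩, b = ‖Ax‖² − ‖Av‖², and τ ∈ R satisfy −aτ² + bτ + a = 0. Define v⁺ = (v + τx)/‖v + τx‖. Then ‖Av⁺‖² − ‖Av‖² = τ·a. -/
open scoped RealInnerProductSpace

theorem stmt7 {d m : ℕ}
    (A : EuclideanSpace ℝ (Fin d) →L[ℝ] EuclideanSpace ℝ (Fin m))
    (v x : EuclideanSpace ℝ (Fin d))
    (hv : ‖v‖ = 1) (hx : ‖x‖ = 1) (hvx : ⟪v, x⟫ = 0)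
    (a b τ : ℝ) (ha : a = ⟪A v, A x⟫) (hb : b = ‖A x‖ ^ 2 - ‖A v‖ ^ 2)
    (hτ : -a * τ ^ 2 + b * τ + a = 0)
    (hne : v + τ • x ≠ 0)
    (vplus : EuclideanSpace ℝ (Fin d))
    (hvplus : vplus = ‖v + τ • x‖⁻¹ • (v + τ • x)) :
    ‖A vplus‖ ^ 2 - ‖A v‖ ^ 2 = τ * a := by
  have hpos : 0 < ‖v + τ • x‖ := norm_pos_iff.mpr hne
  have hns : ‖v + τ • x‖ ^ 2 = 1 + τ ^ 2 := by
    rw [norm_add_sq_real, real_inner_smul_right, hvx, norm_smul, hv, hx]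
    simp [sq_abs]
  have hAs : ‖A (v + τ • x)‖ ^ 2 = ‖A v‖ ^ 2 + 2 * τ * a + τ ^ 2 * ‖A x‖ ^ 2 := by
    rw [map_add, map_smul, norm_add_sq_real, real_inner_smul_right, norm_smul, ha]
    simp [sq_abs, mul_pow]
    ring
  have hAv : ‖A vplus‖ ^ 2 = ‖v + τ • x‖⁻¹ ^ 2 * ‖A (v + τ • x)‖ ^ 2 := by
    rw [hvplus, map_smul, norm_smul, Real.norm_eq_abs, abs_inv, abs_of_pos hpos, mul_pow]
  rw [hAv, hAs]
  have h1 : ‖v + τ • x‖⁻¹ ^ 2 = (1 + τ ^ 2)⁻¹ := by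
    rw [← hns, inv_pow]
  rw [h1]
  have h2 : (1 : ℝ) + τ ^ 2 ≠ 0 := by positivity
  field_simp
  subst hb
  linear_combination τ * hτ
end

section
/- Let v ∈ R^d with ‖v‖ = 1 and let x be uniformly distributed on the unit sphere of {v}^⊥. Then E[⟨Av, Ax⟩²] = (1/(d−1))·‖(I_d − v vᵀ)A*Av‖². -/
open scoped RealInnerProductSpace
open MeasureTheory

lemma exists_isometry_swap {E : Type*} [NormedAddCommGroup E] [InnerProductSpace ℝ E]
    [FiniteDimensional ℝ E] (u1 u2 : E) (h : ‖u1‖ = ‖u2‖) :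
    ∃ O : E ≃ₗᵢ[ℝ] E, O u2 = u1 ∧ ∀ y : E, ⟪u2 - u1, y⟫ = 0 → O y = y := by
  set K : Submodule ℝ E := (ℝ ∙ (u2 - u1))ᗮ with hK
  refine ⟨Submodule.reflection K, ?_, ?_⟩
  · have hdecomp : u2 = (2⁻¹ : ℝ) • (u1 + u2) + (2⁻¹ : ℝ) • (u2 - u1) := by module
    have h1 : (u1 + u2) ∈ K := by
      rw [hK, Submodule.mem_orthogonal_singleton_iff_inner_left]
      simp only [inner_sub_right, inner_add_left]
      rw [real_inner_comm u2 u1]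
      have := real_inner_self_eq_norm_sq u1
      have := real_inner_self_eq_norm_sq u2
      have hn : ‖u1‖ ^ 2 = ‖u2‖ ^ 2 := by rw [h]
      linarith
    have h2 : (u2 - u1) ∈ Kᗮ :=
      (Submodule.le_orthogonal_orthogonal (ℝ ∙ (u2 - u1)))
        (Submodule.mem_span_singleton_self _)
    have e1 : Submodule.reflection K u2
        = Submodule.reflection K ((2⁻¹ : ℝ) • (u1 + u2) + (2⁻¹ : ℝ) • (u2 - u1)) :=
      congrArg _ hdecomp
    rw [e1, map_add, _root_.map_smul, _root_.map_smul, Submodule.reflection_mem_subspace_eq_self h1,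
      Submodule.reflection_mem_subspace_orthogonalComplement_eq_neg h2]
    module
  · intro y hy
    refine Submodule.reflection_mem_subspace_eq_self ?_
    rw [hK, Submodule.mem_orthogonal_singleton_iff_inner_right]
    exact hy

theorem stmt14 {d m : ℕ} (hd : 2 ≤ d)
    (A : EuclideanSpace ℝ (Fin d) →L[ℝ] EuclideanSpace ℝ (Fin m))
    (v : EuclideanSpace ℝ (Fin d)) (hv : ‖v‖ = 1)
    (μ : Measure (EuclideanSpace ℝ (Fin d))) [IsProbabilityMeasure μ]
    (hsupp : μ {x | ‖x‖ = 1 ∧ ⟪x, v⟫ = 0} = 1)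
    (hinv : ∀ O : EuclideanSpace ℝ (Fin d) ≃ₗᵢ[ℝ] EuclideanSpace ℝ (Fin d),
      O v = v → Measure.map O μ = μ) :
    ∫ x, ⟪A v, A x⟫ ^ 2 ∂μ =
      (1 / (d - 1 : ℝ)) *
        ‖(ContinuousLinearMap.adjoint A) (A v) -
            ⟪v, (ContinuousLinearMap.adjoint A) (A v)⟫ • v‖ ^ 2 := by
  set S : Set (EuclideanSpace ℝ (Fin d)) := {x | ‖x‖ = 1 ∧ ⟪x, v⟫ = 0} with hS
  -- the support set holds a.e.
  have hae : ∀ᵐ x ∂μ, x ∈ S := by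
    have hmeas : MeasurableSet S := by
      have h1 : MeasurableSet {x : EuclideanSpace ℝ (Fin d) | ‖x‖ = 1} :=
        (isClosed_eq continuous_norm continuous_const).measurableSet
      have h2 : MeasurableSet {x : EuclideanSpace ℝ (Fin d) | ⟪x, v⟫ = 0} :=
        (isClosed_eq (continuous_id.inner continuous_const) continuous_const).measurableSet
      exact h1.inter h2
    rw [MeasureTheory.ae_iff]
    have : μ Sᶜ = 0 := by
      have h := measure_compl hmeas (measure_ne_top μ S)
      rw [measure_univ, hsupp] at h
      simpa using h
    exact this
  -- integrability of x ↦ ⟪u,x⟫^2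
  have hint : ∀ u : EuclideanSpace ℝ (Fin d), Integrable (fun x => ⟪u, x⟫ ^ 2) μ := by
    intro u
    refine Integrable.mono' (integrable_const (‖u‖ ^ 2))
      ((continuous_const.inner continuous_id).pow 2).aestronglyMeasurable ?_
    filter_upwards [hae] with x hx
    have h1 : |⟪u, x⟫| ≤ ‖u‖ := by
      have := abs_real_inner_le_norm u x
      rw [hx.1] at this; simpa using this
    have : ⟪u, x⟫ ^ 2 ≤ ‖u‖ ^ 2 := by
      calc ⟪u, x⟫ ^ 2 = |⟪u, x⟫| ^ 2 := (sq_abs _).symm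
        _ ≤ ‖u‖ ^ 2 := pow_le_pow_left₀ (abs_nonneg _) h1 2
    calc ‖⟪u, x⟫ ^ 2‖ = ⟪u, x⟫ ^ 2 := by rw [Real.norm_eq_abs, abs_of_nonneg (sq_nonneg _)]
      _ ≤ ‖u‖ ^ 2 := this
  -- invariance: all unit vectors orthogonal to v have same second moment
  have heq : ∀ u1 u2 : EuclideanSpace ℝ (Fin d), ‖u1‖ = 1 → ‖u2‖ = 1 → ⟪v, u1⟫ = 0 → ⟪v, u2⟫ = 0 →
      ∫ x, ⟪u1, x⟫ ^ 2 ∂μ = ∫ x, ⟪u2, x⟫ ^ 2 ∂μ := by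
    intro u1 u2 hn1 hn2 ho1 ho2
    obtain ⟨O, hOu, hOfix⟩ := exists_isometry_swap u1 u2 (by rw [hn1, hn2])
    have hOv : O v = v := by
      refine hOfix v ?_
      have e1 : ⟪u1, v⟫ = 0 := by rw [real_inner_comm]; exact ho1
      have e2 : ⟪u2, v⟫ = 0 := by rw [real_inner_comm]; exact ho2
      rw [inner_sub_left, e1, e2, sub_zero]
    have hmap := hinv O hOv
    calc ∫ x, ⟪u1, x⟫ ^ 2 ∂μ = ∫ x, ⟪u1, x⟫ ^ 2 ∂(Measure.map O μ) := by rw [hmap]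
      _ = ∫ x, ⟪u1, O x⟫ ^ 2 ∂μ := by
          rw [MeasureTheory.integral_map O.continuous.aemeasurable
            ((continuous_const.inner continuous_id).pow 2).aestronglyMeasurable]
      _ = ∫ x, ⟪u2, x⟫ ^ 2 ∂μ := by
          congr 1; funext x
          rw [← hOu, O.inner_map_map]
  -- orthonormal basis of the orthogonal complement of v
  have hv0 : v ≠ 0 := by intro h; rw [h, norm_zero] at hv; norm_num at hv
  have hrank : Module.finrank ℝ ((ℝ ∙ v)ᗮ : Submodule ℝ (EuclideanSpace ℝ (Fin d))) = d - 1 := by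
    have h1 : Module.finrank ℝ (ℝ ∙ v : Submodule ℝ (EuclideanSpace ℝ (Fin d))) = 1 :=
      finrank_span_singleton hv0
    have h2 := Submodule.finrank_add_finrank_orthogonal
      (K := (ℝ ∙ v : Submodule ℝ (EuclideanSpace ℝ (Fin d))))
    rw [h1, finrank_euclideanSpace_fin] at h2
    omega
  let b : OrthonormalBasis (Fin (d - 1)) ℝ ((ℝ ∙ v)ᗮ : Submodule ℝ (EuclideanSpace ℝ (Fin d))) :=
    (stdOrthonormalBasis ℝ _).reindex (finCongr hrank)
  have hb_unit : ∀ i, ‖((b i : (ℝ ∙ v)ᗮ) : EuclideanSpace ℝ (Fin d))‖ = 1 := by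
    intro i
    have := b.orthonormal.1 i
    rwa [Submodule.norm_coe]
  have hb_orth : ∀ i, ⟪v, ((b i : (ℝ ∙ v)ᗮ) : EuclideanSpace ℝ (Fin d))⟫ = 0 := by
    intro i
    exact Submodule.mem_orthogonal_singleton_iff_inner_right.mp (b i).2
  -- the common value of the second moments
  set c : ℝ := ∫ x, ⟪((b ⟨0, by omega⟩ : (ℝ ∙ v)ᗮ) : EuclideanSpace ℝ (Fin d)), x⟫ ^ 2 ∂μ with hc
  have hce : ∀ u : EuclideanSpace ℝ (Fin d), ‖u‖ = 1 → ⟪v, u⟫ = 0 →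
      ∫ x, ⟪u, x⟫ ^ 2 ∂μ = c := by
    intro u hu1 hu2
    exact heq u _ hu1 (hb_unit _) hu2 (hb_orth _)
  -- sum over the basis is 1 pointwise on S
  have hsum : ∀ x ∈ S, ∑ i : Fin (d - 1),
      ⟪((b i : (ℝ ∙ v)ᗮ) : EuclideanSpace ℝ (Fin d)), x⟫ ^ 2 = 1 := by
    intro x hx
    have hxK : x ∈ ((ℝ ∙ v)ᗮ : Submodule ℝ (EuclideanSpace ℝ (Fin d))) := by
      rw [Submodule.mem_orthogonal_singleton_iff_inner_right, real_inner_comm]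
      exact hx.2
    set x' : ((ℝ ∙ v)ᗮ : Submodule ℝ (EuclideanSpace ℝ (Fin d))) := ⟨x, hxK⟩ with hx'
    have key := b.sum_inner_mul_inner x' x'
    have hco : ∀ i, (⟪x', b i⟫ : ℝ) = ⟪x, ((b i : (ℝ ∙ v)ᗮ) : EuclideanSpace ℝ (Fin d))⟫ := by
      intro i; rfl
    have hxx : (⟪x', x'⟫ : ℝ) = 1 := by
      have : (⟪x', x'⟫ : ℝ) = ⟪x, x⟫ := rfl
      rw [this, real_inner_self_eq_norm_sq, hx.1]; norm_num
    calc ∑ i : Fin (d - 1), ⟪((b i : (ℝ ∙ v)ᗮ) : EuclideanSpace ℝ (Fin d)), x⟫ ^ 2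
        = ∑ i : Fin (d - 1), (⟪x', b i⟫ : ℝ) * ⟪b i, x'⟫ := by
          refine Finset.sum_congr rfl fun i _ => ?_
          have e : (⟪b i, x'⟫ : ℝ)
              = ⟪((b i : (ℝ ∙ v)ᗮ) : EuclideanSpace ℝ (Fin d)), x⟫ := rfl
          have e2 : (⟪x', b i⟫ : ℝ)
              = ⟪((b i : (ℝ ∙ v)ᗮ) : EuclideanSpace ℝ (Fin d)), x⟫ := by
            rw [real_inner_comm]; exact e
          rw [e, e2]
          ring
      _ = 1 := by rw [key, hxx]
  -- (d-1) * c = 1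
  have hd1 : (0 : ℝ) < (d : ℝ) - 1 := by
    have : (2 : ℝ) ≤ d := by exact_mod_cast hd
    linarith
  have hcval : ((d : ℝ) - 1) * c = 1 := by
    have hsi : ∫ x, (∑ i : Fin (d - 1),
        ⟪((b i : (ℝ ∙ v)ᗮ) : EuclideanSpace ℝ (Fin d)), x⟫ ^ 2) ∂μ = 1 := by
      rw [MeasureTheory.integral_congr_ae (g := fun _ => (1 : ℝ))
        (by filter_upwards [hae] with x hx; exact hsum x hx)]
      simp
    rw [MeasureTheory.integral_finset_sum _ (fun i _ => hint _)] at hsi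
    have heach : ∀ i : Fin (d - 1),
        ∫ x, ⟪((b i : (ℝ ∙ v)ᗮ) : EuclideanSpace ℝ (Fin d)), x⟫ ^ 2 ∂μ = c :=
      fun i => hce _ (hb_unit i) (hb_orth i)
    rw [Finset.sum_congr rfl (fun i _ => heach i), Finset.sum_const] at hsi
    have hcard : ((Finset.univ : Finset (Fin (d - 1))).card : ℝ) = (d : ℝ) - 1 := by
      simp only [Finset.card_univ, Fintype.card_fin]
      have : (1 : ℕ) ≤ d := by omega
      push_cast [Nat.cast_sub this]
      ring
    rw [nsmul_eq_mul, hcard] at hsi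
    exact hsi
  -- now the main computation
  set w : EuclideanSpace ℝ (Fin d) := (ContinuousLinearMap.adjoint A) (A v) with hw
  set w' : EuclideanSpace ℝ (Fin d) := w - ⟪v, w⟫ • v with hw'
  have hstep1 : ∫ x, ⟪A v, A x⟫ ^ 2 ∂μ = ∫ x, ⟪w', x⟫ ^ 2 ∂μ := by
    refine MeasureTheory.integral_congr_ae ?_
    filter_upwards [hae] with x hx
    have h1 : ⟪A v, A x⟫ = ⟪w, x⟫ := (ContinuousLinearMap.adjoint_inner_left A x (A v)).symm
    have h2 : ⟪w', x⟫ = ⟪w, x⟫ := by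
      rw [hw', inner_sub_left, real_inner_smul_left, real_inner_comm x v, hx.2]
      ring
    rw [h1, h2]
  have hw'orth : ⟪v, w'⟫ = 0 := by
    rw [hw', inner_sub_right, real_inner_smul_right, real_inner_self_eq_norm_sq, hv]
    ring
  rw [hstep1]
  by_cases hz : w' = 0
  · rw [hz]
    simp
  · set u : EuclideanSpace ℝ (Fin d) := ‖w'‖⁻¹ • w' with hu
    have hwn : (0 : ℝ) < ‖w'‖ := norm_pos_iff.mpr hz
    have hu1 : ‖u‖ = 1 := by
      rw [hu, norm_smul, norm_inv, norm_norm, inv_mul_cancel₀ hwn.ne']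
    have hu2 : ⟪v, u⟫ = 0 := by
      rw [hu, real_inner_smul_right, hw'orth]; ring
    have hrw : ∀ x : EuclideanSpace ℝ (Fin d), ⟪w', x⟫ ^ 2 = ‖w'‖ ^ 2 * ⟪u, x⟫ ^ 2 := by
      intro x
      rw [hu, real_inner_smul_left]
      field_simp
    calc ∫ x, ⟪w', x⟫ ^ 2 ∂μ = ∫ x, ‖w'‖ ^ 2 * ⟪u, x⟫ ^ 2 ∂μ := by
          simp_rw [hrw]
      _ = ‖w'‖ ^ 2 * ∫ x, ⟪u, x⟫ ^ 2 ∂μ := MeasureTheory.integral_const_mul _ _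
      _ = ‖w'‖ ^ 2 * c := by rw [hce u hu1 hu2]
      _ = (1 / ((d : ℝ) - 1)) * ‖w'‖ ^ 2 := by
          have : c = 1 / ((d : ℝ) - 1) := by
            field_simp at hcval ⊢
            linarith
          rw [this]; ring
end

section
/- Let (vᵏ) be a sequence of unit vectors such that ‖Avᵏ‖² is nondecreasing in k, each accumulation point of (vᵏ) is an eigenvector of A*A, and ‖Av^{k₀}‖ > σ₂ for some k₀, where σ₂ is the second largest singular value of A. Then ‖Avᵏ‖ → ‖A‖ as k → ∞. -/
open scoped RealInnerProductSpace
open Filter Topology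

theorem stmt16 {d m : ℕ}
    (A : EuclideanSpace ℝ (Fin d) →L[ℝ] EuclideanSpace ℝ (Fin m))
    (σ₂ : ℝ)
    (hσ₂ : ∀ u : EuclideanSpace ℝ (Fin d), ‖u‖ = 1 →
      (∃ μ : ℝ, (ContinuousLinearMap.adjoint A) (A u) = μ • u) →
      ‖A u‖ ≤ σ₂ ∨ ‖A u‖ = ‖A‖)
    (v : ℕ → EuclideanSpace ℝ (Fin d)) (hunit : ∀ k, ‖v k‖ = 1)
    (hmono : Monotone fun k => ‖A (v k)‖ ^ 2)
    (hacc : ∀ u : EuclideanSpace ℝ (Fin d), MapClusterPt u atTop v →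
      ∃ μ : ℝ, (ContinuousLinearMap.adjoint A) (A u) = μ • u)
    (k₀ : ℕ) (hk₀ : σ₂ < ‖A (v k₀)‖) :
    Tendsto (fun k => ‖A (v k)‖) atTop (𝓝 ‖A‖) := by
  -- bound: ‖A (v k)‖ ≤ ‖A‖
  have hbd : ∀ k, ‖A (v k)‖ ≤ ‖A‖ := fun k => by
    have := A.le_opNorm (v k); rwa [hunit k, mul_one] at this
  have hbdd : BddAbove (Set.range fun k => ‖A (v k)‖ ^ 2) := by
    refine ⟨‖A‖ ^ 2, fun x ⟨k, hk⟩ => ?_⟩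
    rw [← hk]
    exact pow_le_pow_left₀ (norm_nonneg _) (hbd k) 2
  set L : ℝ := ⨆ k, ‖A (v k)‖ ^ 2 with hL
  have hlim : Tendsto (fun k => ‖A (v k)‖ ^ 2) atTop (𝓝 L) :=
    tendsto_atTop_ciSup hmono hbdd
  -- cluster point
  have hsphere : IsCompact (Metric.sphere (0 : EuclideanSpace ℝ (Fin d)) 1) :=
    isCompact_sphere 0 1
  have hmem : ∀ k, v k ∈ Metric.sphere (0 : EuclideanSpace ℝ (Fin d)) 1 := fun k => by
    simp [hunit k]
  obtain ⟨u, hu_mem, φ, hφ, hφt⟩ := hsphere.tendsto_subseq hmem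
  have hu_unit : ‖u‖ = 1 := by simpa using hu_mem
  have hcl : MapClusterPt u atTop v :=
    MapClusterPt.of_comp (hφ.tendsto_atTop) hφt.mapClusterPt
  -- L = ‖A u‖ ^ 2
  have h1 : Tendsto (fun k => ‖A (v (φ k))‖ ^ 2) atTop (𝓝 (‖A u‖ ^ 2)) := by
    have : Tendsto (fun k => A (v (φ k))) atTop (𝓝 (A u)) :=
      (A.continuous.tendsto u).comp hφt
    exact (this.norm).pow 2
  have h2 : Tendsto (fun k => ‖A (v (φ k))‖ ^ 2) atTop (𝓝 L) :=
    hlim.comp hφ.tendsto_atTop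
  have hLAu : L = ‖A u‖ ^ 2 := tendsto_nhds_unique h2 h1
  -- ‖A u‖ > σ₂
  have hk₀L : ‖A (v k₀)‖ ^ 2 ≤ L := le_ciSup hbdd k₀
  have hAu_gt : σ₂ < ‖A u‖ := by
    rcases lt_or_ge σ₂ 0 with h | h
    · exact h.trans_le (norm_nonneg _)
    · nlinarith [norm_nonneg (A (v k₀)), norm_nonneg (A u), hLAu ▸ hk₀L]
  have hAu : ‖A u‖ = ‖A‖ := by
    rcases hσ₂ u hu_unit (hacc u hcl) with h | h
    · exact absurd h (not_le.mpr hAu_gt)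
    · exact h
  -- conclude
  have hlim2 : Tendsto (fun k => ‖A (v k)‖ ^ 2) atTop (𝓝 (‖A‖ ^ 2)) := by
    rw [← hAu, ← hLAu]; exact hlim
  have hsqrt : Tendsto (fun k => Real.sqrt (‖A (v k)‖ ^ 2)) atTop
      (𝓝 (Real.sqrt (‖A‖ ^ 2))) :=
    (Real.continuous_sqrt.tendsto _).comp hlim2
  simpa [Real.sqrt_sq (norm_nonneg _)] using hsqrt
end

section
/- Suppose the algorithm updates satisfy ‖Av^{k+1}‖² − ‖Avᵏ‖² = τₖaₖ with aₖτₖ ≥ 0, |bₖ| ≤ ‖A‖², aₖ² = aₖτₖ(aₖτₖ − bₖ), and ‖Avᵏ‖ ≤ ‖A‖ for all k. Then min_{0≤k≤n} aₖ² ≤ 2‖A‖⁴/(n+1). -/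
theorem stmt18 {d m : ℕ}
    (A : EuclideanSpace ℝ (Fin d) →L[ℝ] EuclideanSpace ℝ (Fin m))
    (v : ℕ → EuclideanSpace ℝ (Fin d)) (hunit : ∀ k, ‖v k‖ = 1)
    (a b τ : ℕ → ℝ)
    (hstep : ∀ k, ‖A (v (k + 1))‖ ^ 2 - ‖A (v k)‖ ^ 2 = τ k * a k)
    (hpos : ∀ k, 0 ≤ a k * τ k)
    (hbbd : ∀ k, |b k| ≤ ‖A‖ ^ 2)
    (hquad : ∀ k, a k ^ 2 = a k * τ k * (a k * τ k - b k))
    (hAv : ∀ k, ‖A (v k)‖ ≤ ‖A‖) (n : ℕ) :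
    ∃ k ≤ n, a k ^ 2 ≤ 2 * ‖A‖ ^ 4 / (n + 1) := by
  have hA0 : (0:ℝ) ≤ ‖A‖ := norm_nonneg _
  have hnp : (0:ℝ) < (n:ℝ) + 1 := by positivity
  -- telescoping sum
  have hsum : ∑ k ∈ Finset.range (n+1), a k * τ k
      = ‖A (v (n+1))‖ ^ 2 - ‖A (v 0)‖ ^ 2 := by
    have := Finset.sum_range_sub (fun k => ‖A (v k)‖ ^ 2) (n+1)
    rw [← this]
    exact Finset.sum_congr rfl fun k _ => by rw [hstep k]; ring
  have hsumle : ∑ k ∈ Finset.range (n+1), a k * τ k ≤ ‖A‖ ^ 2 := by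
    rw [hsum]
    have h1 : ‖A (v (n+1))‖ ^ 2 ≤ ‖A‖ ^ 2 :=
      pow_le_pow_left₀ (norm_nonneg _) (hAv (n+1)) 2
    nlinarith [sq_nonneg ‖A (v 0)‖]
  -- some term is at most the average
  have havg : ∃ k ∈ Finset.range (n+1), a k * τ k ≤ ‖A‖ ^ 2 / ((n:ℝ) + 1) := by
    apply Finset.exists_le_of_sum_le (Finset.nonempty_range_iff.mpr (Nat.succ_ne_zero n))
    have : ∑ _k ∈ Finset.range (n+1), ‖A‖ ^ 2 / ((n:ℝ) + 1) = ‖A‖ ^ 2 := by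
      rw [Finset.sum_const, Finset.card_range, nsmul_eq_mul]
      push_cast
      field_simp
    rw [this]; exact hsumle
  obtain ⟨k, hk, hkle⟩ := havg
  refine ⟨k, Nat.lt_succ_iff.mp (Finset.mem_range.mp hk), ?_⟩
  have hs0 := hpos k
  have hb := hbbd k
  have hb' : -(‖A‖ ^ 2) ≤ b k := neg_le_of_abs_le hb
  have hsA : a k * τ k ≤ ‖A‖ ^ 2 := by
    calc a k * τ k ≤ ‖A‖ ^ 2 / ((n:ℝ) + 1) := hkle
    _ ≤ ‖A‖ ^ 2 := by
        apply div_le_self (by positivity)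
        linarith [Nat.cast_nonneg (α := ℝ) n]
  have h2 : a k * τ k * ((n:ℝ)+1) ≤ ‖A‖ ^ 2 := (le_div_iff₀ hnp).mp hkle
  rw [hquad k, le_div_iff₀ hnp]
  have h3 : 0 ≤ a k * τ k * (a k * τ k - b k) := (hquad k) ▸ sq_nonneg (a k)
  have h4 : a k * τ k - b k ≤ 2 * ‖A‖ ^ 2 := by linarith
  rcases eq_or_lt_of_le hs0 with hs | hs
  · rw [← hs]
    have : (0:ℝ) ≤ 2 * ‖A‖ ^ 4 := by positivity
    linarith
  · have hsb : 0 ≤ a k * τ k - b k := nonneg_of_mul_nonneg_right h3 hs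
    nlinarith [mul_le_mul h2 h4 hsb (by positivity : (0:ℝ) ≤ ‖A‖ ^ 2)]
end
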